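/- arXiv:1508.07256 — 3 statements merged into one kernel-verified Lean document; each statement's English description precedes it below -/
import Mathlib

section
/- Let H be a bipartite graph with bipartition sides A and B, where A is infinite and every vertex of B has finite degree. Then at least one of the following holds: (a) there exists an infinite set X ⊆ A such that any two distinct vertices of X have no common neighbor in H; (b) H admits the countably infinite clique K_ω as a shallow minor at depth 1. -/
namespace NWD

open SimpleGraph Filter

/-! ### Shallow minors -/

/-- A `d`-shallow minor model of `H` in `G`: a family of pairwise disjoint branch sets,
each connected of radius at most `d` (witnessed by a center joined to every vertex of the
branch set by a walk of length at most `d` inside the branch set), such that every edge of `H`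
is realized by an edge of `G` between the corresponding branch sets. -/
def IsShallowMinorModel {V W : Type} (G : SimpleGraph V) (H : SimpleGraph W) (d : ℕ)
    (α : W → G.Subgraph) : Prop :=
  (∀ w : W, ∃ c : (α w).verts, ∀ x : (α w).verts, ∃ p : (α w).coe.Walk c x, p.length ≤ d) ∧
  (∀ w w' : W, w ≠ w' → Disjoint (α w).verts (α w').verts) ∧
  (∀ w w' : W, H.Adj w w' → ∃ x ∈ (α w).verts, ∃ y ∈ (α w').verts, G.Adj x y)

/-- `H` is a shallow minor of `G` at depth `d`. -/
def IsShallowMinor {V W : Type} (G : SimpleGraph V) (H : SimpleGraph W) (d : ℕ) : Prop :=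
  ∃ α : W → G.Subgraph, IsShallowMinorModel G H d α

/-! ### Topological shallow minors -/

/-- A `d`-shallow topological minor model of `H` in `G`: an injective map `f` on vertices
together with, for every edge `uv` of `H`, a path of length at most `2d+1` in `G` from `f u`
to `f v`; the paths are pairwise vertex-disjoint apart from possibly sharing endpoints. -/
def IsTopMinorModel {V W : Type} (G : SimpleGraph V) (H : SimpleGraph W) (d : ℕ)
    (f : W → V) (P : ∀ ⦃u v : W⦄, H.Adj u v → G.Walk (f u) (f v)) : Prop :=
  Function.Injective f ∧
  (∀ ⦃u v : W⦄ (h : H.Adj u v), (P h).IsPath) ∧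
  (∀ ⦃u v : W⦄ (h : H.Adj u v), (P h).length ≤ 2 * d + 1) ∧
  (∀ ⦃u v : W⦄ (h : H.Adj u v), P h.symm = (P h).reverse) ∧
  (∀ ⦃u v u' v' : W⦄ (h : H.Adj u v) (h' : H.Adj u' v'), s(u, v) ≠ s(u', v') →
    ∀ x : V, x ∈ (P h).support → x ∈ (P h').support →
      (x = f u ∨ x = f v) ∧ (x = f u' ∨ x = f v'))

/-- `H` is a topological shallow minor of `G` at depth `d`. -/
def IsTopShallowMinor {V W : Type} (G : SimpleGraph V) (H : SimpleGraph W) (d : ℕ) : Prop :=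
  ∃ (f : W → V) (P : ∀ ⦃u v : W⦄, H.Adj u v → G.Walk (f u) (f v)),
    IsTopMinorModel G H d f P

/-! ### Ultraproducts of graphs -/

/-- The setoid identifying sequences agreeing on a set of the ultrafilter. -/
def prodSetoid (U : Ultrafilter ℕ) (Vs : ℕ → Type) : Setoid (∀ n, Vs n) where
  r g h := ∀ᶠ n in (U : Filter ℕ), g n = h n
  iseqv := by
    constructor
    · intro g; exact Eventually.of_forall fun n => rfl
    · intro g h hg; exact hg.mono fun n hn => hn.symm
    · intro g h k h1 h2; filter_upwards [h1, h2] with n e1 e2; rw [e1, e2]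

/-- The vertex set of the ultraproduct. -/
def UVertex (U : Ultrafilter ℕ) (Vs : ℕ → Type) : Type := Quotient (prodSetoid U Vs)

/-- The ultraproduct of a sequence of graphs along the ultrafilter `U`. -/
def UGraph (U : Ultrafilter ℕ) {Vs : ℕ → Type} (Gs : ∀ n, SimpleGraph (Vs n)) :
    SimpleGraph (UVertex U Vs) where
  Adj x y := Quotient.liftOn₂ x y
    (fun g h => ∀ᶠ n in (U : Filter ℕ), (Gs n).Adj (g n) (h n))
    (by
      intro a b a' b' ha hb
      apply propext
      constructor
      · intro hadj; filter_upwards [hadj, ha, hb] with n h1 h2 h3; rw [← h2, ← h3]; exact h1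
      · intro hadj; filter_upwards [hadj, ha, hb] with n h1 h2 h3; rw [h2, h3]; exact h1)
  symm := by
    constructor
    intro x y
    refine Quotient.inductionOn₂ x y ?_
    intro g h hadj
    exact hadj.mono fun n hn => hn.symm
  loopless := by
    constructor
    intro x
    refine Quotient.inductionOn x ?_
    intro g hadj
    obtain ⟨n, hn⟩ := hadj.exists
    exact (Gs n).loopless.irrefl _ hn

/-! ### Graph classes and class limits -/

/-- A class of graphs: a predicate on graphs over arbitrary vertex types. -/
def GraphClass : Type 1 := ∀ V : Type, SimpleGraph V → Prop

/-- `C` is a class of finite graphs. -/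
def FiniteClass (C : GraphClass) : Prop :=
  ∀ (V : Type) (G : SimpleGraph V), C V G → Finite V

/-- `H` is (isomorphic to) a subgraph of `G`. -/
def IsSubgraphOf {W V : Type} (H : SimpleGraph W) (G : SimpleGraph V) : Prop :=
  ∃ f : W → V, Function.Injective f ∧ ∀ ⦃u v : W⦄, H.Adj u v → G.Adj (f u) (f v)

/-- Membership in the class limit `C*`: subgraphs of ultraproducts of sequences from `C`. -/
def InLimit (U : Ultrafilter ℕ) (C : GraphClass) {W : Type} (H : SimpleGraph W) : Prop :=
  ∃ (Vs : ℕ → Type) (Gs : ∀ n, SimpleGraph (Vs n)),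
    (∀ n, C (Vs n) (Gs n)) ∧ IsSubgraphOf H (UGraph U Gs)

/-- `H ∈ C ▽ d`. -/
def InClassMinor (C : GraphClass) (d : ℕ) {W : Type} (H : SimpleGraph W) : Prop :=
  ∃ (V : Type) (G : SimpleGraph V), C V G ∧ IsShallowMinor G H d

/-- `H ∈ C ∇̃ d`. -/
def InClassTopMinor (C : GraphClass) (d : ℕ) {W : Type} (H : SimpleGraph W) : Prop :=
  ∃ (V : Type) (G : SimpleGraph V), C V G ∧ IsTopShallowMinor G H d

/-- `H ∈ C* ▽ d`. -/
def InLimitMinor (U : Ultrafilter ℕ) (C : GraphClass) (d : ℕ) {W : Type}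
    (H : SimpleGraph W) : Prop :=
  ∃ (V : Type) (G : SimpleGraph V), InLimit U C G ∧ IsShallowMinor G H d

/-- `H ∈ C* ∇̃ d`. -/
def InLimitTopMinor (U : Ultrafilter ℕ) (C : GraphClass) (d : ℕ) {W : Type}
    (H : SimpleGraph W) : Prop :=
  ∃ (V : Type) (G : SimpleGraph V), InLimit U C G ∧ IsTopShallowMinor G H d

/-- `C` is somewhere dense: all finite graphs are shallow minors at some fixed depth. -/
def SomewhereDense (C : GraphClass) : Prop :=
  ∃ d : ℕ, ∀ (W : Type) (H : SimpleGraph W), Finite W → InClassMinor C d H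

/-- `C` is topologically somewhere dense. -/
def TopSomewhereDense (C : GraphClass) : Prop :=
  ∃ d : ℕ, ∀ (W : Type) (H : SimpleGraph W), Finite W → InClassTopMinor C d H

/-- The countably infinite clique `K_ω`. -/
def Komega : SimpleGraph ℕ := ⊤

/-- The clique on continuum many vertices `K_𝔠`. -/
def Kcontinuum : SimpleGraph (Set ℕ) := ⊤

/-- `C` is hereditary: closed under induced subgraphs. -/
def Hereditary (C : GraphClass) : Prop :=
  ∀ (V : Type) (G : SimpleGraph V), C V G →
    ∀ (W : Type) (f : W → V), Function.Injective f → C W (G.comap f)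

/-! ### Scattered sets and quasi-wideness -/

/-- `X` is a `d`-scattered set of `G - S`: it avoids `S`, and any two distinct vertices of `X`
are at distance greater than `2d` in `G - S` (every connecting walk avoiding `S` is longer
than `2d`). -/
def ScatteredIn {V : Type} (G : SimpleGraph V) (d : ℕ) (S X : Set V) : Prop :=
  Disjoint X S ∧ ∀ u ∈ X, ∀ v ∈ X, u ≠ v →
    ∀ p : G.Walk u v, (∀ x ∈ p.support, x ∉ S) → 2 * d < p.length

/-- `C` is quasi-wide with margin `s`. -/
def QuasiWide (C : GraphClass) (s : ℕ → ℕ) : Prop :=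
  ∀ d m : ℕ, ∃ N : ℕ, ∀ (V : Type) (G : SimpleGraph V), C V G → N ≤ Nat.card V →
    ∃ S X : Set V, S.Finite ∧ S.ncard ≤ s d ∧ X.Finite ∧ X.ncard = m ∧ ScatteredIn G d S X

/-- `C` is uniformly quasi-wide with margin `s`. -/
def UniformlyQuasiWide (C : GraphClass) (s : ℕ → ℕ) : Prop :=
  ∀ d m : ℕ, ∃ N : ℕ, ∀ (V : Type) (G : SimpleGraph V), C V G →
    ∀ W : Set V, N ≤ W.ncard →
      ∃ S X : Set V, S.Finite ∧ S.ncard ≤ s d ∧ X ⊆ W ∧ X.Finite ∧ X.ncard = m ∧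
        ScatteredIn G d S X

/-- `C` is limit quasi-wide. -/
def LimitQW (U : Ultrafilter ℕ) (C : GraphClass) : Prop :=
  ∀ (d : ℕ) (V : Type) (G : SimpleGraph V), InLimit U C G → Infinite V →
    ∃ S X : Set V, S.Finite ∧ X.Infinite ∧ ScatteredIn G d S X

/-- `C` is uniformly limit quasi-wide. -/
def UniformLimitQW (U : Ultrafilter ℕ) (C : GraphClass) : Prop :=
  ∀ (d : ℕ) (V : Type) (G : SimpleGraph V), InLimit U C G →
    ∀ W : Set V, W.Infinite →
      ∃ S X : Set V, S.Finite ∧ X ⊆ W ∧ X.Infinite ∧ ScatteredIn G d S X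

/-- `C` is strongly limit quasi-wide with margin `s`. -/
def StrongLimitQW (U : Ultrafilter ℕ) (C : GraphClass) (s : ℕ → ℕ) : Prop :=
  ∀ (d : ℕ) (V : Type) (G : SimpleGraph V), InLimit U C G → Infinite V →
    ∃ S X : Set V, S.Finite ∧ S.ncard ≤ s d ∧ X.Infinite ∧ ScatteredIn G d S X

/-- `C` is strongly uniformly limit quasi-wide with margin `s`. -/
def StrongUniformLimitQW (U : Ultrafilter ℕ) (C : GraphClass) (s : ℕ → ℕ) : Prop :=
  ∀ (d : ℕ) (V : Type) (G : SimpleGraph V), InLimit U C G →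
    ∀ W : Set V, W.Infinite →
      ∃ S X : Set V, S.Finite ∧ S.ncard ≤ s d ∧ X ⊆ W ∧ X.Infinite ∧ ScatteredIn G d S X

/-! ### The splitter game -/

/-- One round of the splitter game: from arena `A`, connector picks `v`, splitter picks `W`;
the new arena consists of the vertices of `A` outside `W` at distance at most `d` from `v`
in the subgraph induced by `A`. -/
def arenaStep {V : Type} (G : SimpleGraph V) (d : ℕ) (A : Set V) (v : V) (W : Set V) : Set V :=
  {x | x ∈ A ∧ x ∉ W ∧ ∃ p : G.Walk v x, p.length ≤ d ∧ ∀ y ∈ p.support, y ∈ A}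

/-- The arena after a (chronological) history of moves. -/
def arenaAfter {V : Type} (G : SimpleGraph V) (d : ℕ) (hist : List (V × Set V)) : Set V :=
  hist.foldl (fun A mv => arenaStep G d A mv.1 mv.2) Set.univ

/-- A strategy for splitter: given the history and connector's new move, produce a set. -/
def SplitterStrategy (V : Type) : Type := List (V × Set V) → V → Set V

/-- The history of the play where connector plays `c` and splitter follows `σ`. -/
def splitterHist {V : Type} (σ : SplitterStrategy V) (c : ℕ → V) : ℕ → List (V × Set V)
  | 0 => []
  | n + 1 => splitterHist σ c n ++ [(c n, σ (splitterHist σ c n) (c n))]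

/-- Connector's first `n` moves are valid (inside the successive arenas). -/
def ConsistentPlay {V : Type} (G : SimpleGraph V) (d : ℕ) (σ : SplitterStrategy V)
    (c : ℕ → V) (n : ℕ) : Prop :=
  ∀ k < n, c k ∈ arenaAfter G d (splitterHist σ c k)

/-- `σ` is a winning strategy for splitter in the limit `d`-splitter game on `G`:
its moves are valid (finite subsets of the arena) along any consistent play, and no
infinite sequence of valid connector moves exists. -/
def SplitterWinsLimit {V : Type} (G : SimpleGraph V) (d : ℕ) (σ : SplitterStrategy V) : Prop :=
  (∀ (c : ℕ → V) (n : ℕ), ConsistentPlay G d σ c (n + 1) →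
      (σ (splitterHist σ c n) (c n)).Finite ∧
      σ (splitterHist σ c n) (c n) ⊆ arenaAfter G d (splitterHist σ c n)) ∧
  (∀ c : ℕ → V, ∃ n : ℕ, c n ∉ arenaAfter G d (splitterHist σ c n))

/-- `σ` is a winning strategy for splitter in the `(ℓ, m, d)`-splitter game on `G`. -/
def SplitterWinsGame {V : Type} (G : SimpleGraph V) (l m d : ℕ) (σ : SplitterStrategy V) :
    Prop :=
  (∀ (c : ℕ → V) (n : ℕ), ConsistentPlay G d σ c (n + 1) →
      (σ (splitterHist σ c n) (c n)).Finite ∧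
      (σ (splitterHist σ c n) (c n)).ncard ≤ m ∧
      σ (splitterHist σ c n) (c n) ⊆ arenaAfter G d (splitterHist σ c n)) ∧
  (∀ c : ℕ → V, ∃ n ≤ l, c n ∉ arenaAfter G d (splitterHist σ c n))

/-- A strategy for connector: given the history, produce a vertex. -/
def ConnectorStrategy (V : Type) : Type := List (V × Set V) → V

/-- The history of the play where connector follows `τ` and splitter plays `w`. -/
def connectorHist {V : Type} (τ : ConnectorStrategy V) (w : ℕ → Set V) :
    ℕ → List (V × Set V)
  | 0 => []
  | n + 1 => connectorHist τ w n ++ [(τ (connectorHist τ w n), w n)]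

/-- `τ` is a winning strategy for connector in the limit `d`-splitter game on `G`:
as long as splitter's moves are valid, connector's moves stay in the arena forever. -/
def ConnectorWinsLimit {V : Type} (G : SimpleGraph V) (d : ℕ) (τ : ConnectorStrategy V) :
    Prop :=
  ∀ (w : ℕ → Set V) (n : ℕ),
    (∀ k < n, (w k).Finite ∧ w k ⊆ arenaAfter G d (connectorHist τ w k)) →
    τ (connectorHist τ w n) ∈ arenaAfter G d (connectorHist τ w n)

/-- `τ` is a winning strategy for connector in the `(ℓ, m, d)`-splitter game on `G`:
the arena stays nonempty for `ℓ` rounds, i.e. connector has valid moves at rounds `0,…,ℓ`. -/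
def ConnectorWinsGame {V : Type} (G : SimpleGraph V) (l m d : ℕ) (τ : ConnectorStrategy V) :
    Prop :=
  ∀ (w : ℕ → Set V) (n : ℕ), n ≤ l →
    (∀ k < n, (w k).Finite ∧ (w k).ncard ≤ m ∧
      w k ⊆ arenaAfter G d (connectorHist τ w k)) →
    τ (connectorHist τ w n) ∈ arenaAfter G d (connectorHist τ w n)

/-- `C` is winning for splitter. -/
def WinningForSplitter (C : GraphClass) : Prop :=
  ∀ d : ℕ, ∃ l m : ℕ, ∀ (V : Type) (G : SimpleGraph V), C V G →
    ∃ σ : SplitterStrategy V, SplitterWinsGame G l m d σ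

/-- `C` is limit winning for splitter. -/
def LimitWinningForSplitter (U : Ultrafilter ℕ) (C : GraphClass) : Prop :=
  ∀ (d : ℕ) (V : Type) (G : SimpleGraph V), InLimit U C G →
    ∃ σ : SplitterStrategy V, SplitterWinsLimit G d σ

/-! ### First-order satisfaction in graphs -/

/-- `G` satisfies the first-order sentence `φ` in the language of graphs. -/
def GSat {V : Type} (G : SimpleGraph V) (φ : FirstOrder.Language.graph.Sentence) : Prop :=
  @FirstOrder.Language.Sentence.Realize FirstOrder.Language.graph V G.structure φ

end NWD

/-! By Ramsey's theorem for the relation "have disjoint neighbourhoods" on `A`, either (a) holds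
or some infinite `X ⊆ A` has a common neighbour `c(u, v)` for any two distinct `u, v ∈ X`. In
the latter case pick `y₀, y₁, … ∈ X` greedily so that `yₙ` is adjacent to no `c(yᵢ, yⱼ)` with
`i < j < n`; this is possible since these common neighbours lie in `B` and so have finite degree.
The stars `{yₙ} ∪ {c(yᵢ, yₙ) | i < n}` are then pairwise disjoint branch sets of radius one, and
`c(yₘ, yₙ)` joins the `m`-th to the `n`-th. -/

open Filter Function

theorem exists_seq_of_forall_finset_exists_prefix {α : Type*} [DecidableEq α] (P : α → Prop)
    (r : Finset α → α → Prop) (h : ∀ s : Finset α, (∀ x ∈ s, P x) → ∃ y, P y ∧ r s y) :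
    ∃ f : ℕ → α, (∀ n, P (f n)) ∧ ∀ n, r ((Finset.range n).image f) (f n) := by
  have : Nonempty α := let ⟨y, _⟩ := h ∅ (by simp); ⟨y⟩
  choose! g hg using h
  let pre : ℕ → Finset α := fun n => Nat.rec ∅ (fun _ s => insert (g s) s) n
  have hP : ∀ n, ∀ x ∈ pre n, P x := by
    intro n
    induction n with
    | zero => simp [pre]
    | succ n ih => exact (Finset.forall_mem_insert _ _ _).2 ⟨(hg _ ih).1, ih⟩
  have hpre : ∀ n, pre n = (Finset.range n).image fun k => g (pre k) := by
    intro n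
    induction n with
    | zero => rfl
    | succ n ih => rw [Finset.range_add_one, Finset.image_insert, ← ih]
  exact ⟨fun n => g (pre n), fun n => (hg _ (hP n)).1, fun n => hpre n ▸ (hg _ (hP n)).2⟩

theorem Ultrafilter.exists_infinite_pairwise_of_eventually_eventually {α : Type*}
    {𝒰 : Ultrafilter α} (h𝒰 : (𝒰 : Filter α) ≤ cofinite) {s : Set α} (hs : s ∈ 𝒰)
    {R : α → α → Prop} [Std.Symm R] (hR : ∀ᶠ x in 𝒰, ∀ᶠ y in 𝒰, R x y) :
    ∃ t ⊆ s, t.Infinite ∧ t.Pairwise R := by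
  obtain ⟨f, hfs, hf⟩ := exists_seq_of_forall_finset_exists
    (fun x => x ∈ s ∧ ∀ᶠ y in 𝒰, R x y) (fun x y => x ≠ y ∧ R x y) fun F hF => by
      have hfresh : ∀ᶠ y in 𝒰, y ∉ F := h𝒰 F.eventually_cofinite_notMem
      have hafter : ∀ᶠ y in 𝒰, ∀ x ∈ F, R x y := (eventually_all_finset F).2 fun x hx => (hF x hx).2
      obtain ⟨y, ⟨hys, hyR⟩, hyF, hFy⟩ := (((show ∀ᶠ y in 𝒰, y ∈ s from hs).and hR).and
        (hfresh.and hafter)).exists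
      exact ⟨y, ⟨hys, hyR⟩, fun x hx => ⟨fun hxy => hyF (hxy ▸ hx), hFy x hx⟩⟩
  have hinj : Injective f :=
    injective_iff_pairwise_ne.2 <| (Std.Symm.pairwise_on f).2 fun m n hmn => (hf m n hmn).1
  refine ⟨Set.range f, Set.range_subset_iff.2 fun n => (hfs n).1,
    Set.infinite_range_of_injective hinj, Pairwise.range_pairwise ?_⟩
  exact (Std.Symm.pairwise_on f).2 fun m n hmn => (hf m n hmn).2

/-- Infinite Ramsey theorem for two colours. -/
theorem Set.Infinite.exists_infinite_pairwise_or_pairwise_not {α : Type*} {s : Set α}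
    (hs : s.Infinite) (R : α → α → Prop) [Std.Symm R] :
    ∃ t ⊆ s, t.Infinite ∧ (t.Pairwise R ∨ t.Pairwise fun x y => ¬R x y) := by
  have := hs.cofinite_inf_principal_neBot
  set 𝒰 := Ultrafilter.of (cofinite ⊓ 𝓟 s)
  have h𝒰 : (𝒰 : Filter α) ≤ cofinite := (Ultrafilter.of_le _).trans inf_le_left
  have hs𝒰 : s ∈ 𝒰 := (Ultrafilter.of_le _).trans inf_le_right (mem_principal_self s)
  by_cases hR : ∀ᶠ x in 𝒰, ∀ᶠ y in 𝒰, R x y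
  · obtain ⟨t, hts, ht, htR⟩ := 𝒰.exists_infinite_pairwise_of_eventually_eventually h𝒰 hs𝒰 hR
    exact ⟨t, hts, ht, Or.inl htR⟩
  · have : Std.Symm fun x y => ¬R x y := ⟨fun _ _ h h' => h (symm h')⟩
    simp only [← Ultrafilter.eventually_not] at hR
    obtain ⟨t, hts, ht, htR⟩ := 𝒰.exists_infinite_pairwise_of_eventually_eventually h𝒰 hs𝒰 hR
    exact ⟨t, hts, ht, Or.inr htR⟩

namespace NWD

open SimpleGraph

section

variable {V : Type} {G : SimpleGraph V}

theorem exists_center_walk_length_le_one_induce_insert {v : V} {L : Set V}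
    (hL : L ⊆ G.neighborSet v) :
    ∃ c : ((⊤ : G.Subgraph).induce (insert v L)).verts,
      ∀ x : ((⊤ : G.Subgraph).induce (insert v L)).verts,
        ∃ p : ((⊤ : G.Subgraph).induce (insert v L)).coe.Walk c x, p.length ≤ 1 := by
  refine ⟨⟨v, Set.mem_insert v L⟩, fun ⟨x, hx⟩ => ?_⟩
  rcases hx with rfl | hx
  · exact ⟨Walk.nil, zero_le_one⟩
  · exact ⟨Walk.cons ⟨Set.mem_insert _ _, Set.mem_insert_of_mem _ hx, hL hx⟩ Walk.nil, le_rfl⟩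

theorem isShallowMinor_komega_one_of_stars (y : ℕ → V) (L : ℕ → Set V)
    (hL : ∀ n, L n ⊆ G.neighborSet (y n))
    (hdisj : Pairwise fun m n => Disjoint (insert (y m) (L m)) (insert (y n) (L n)))
    (hlink : ∀ m n, m < n → ∃ x ∈ L n, G.Adj (y m) x) :
    IsShallowMinor G Komega 1 := by
  refine ⟨fun n => (⊤ : G.Subgraph).induce (insert (y n) (L n)),
    fun n => exists_center_walk_length_le_one_induce_insert (hL n), hdisj, fun m n hmn => ?_⟩
  rcases lt_or_gt_of_ne hmn with h | h
  · obtain ⟨x, hx, hadj⟩ := hlink m n h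
    exact ⟨y m, Set.mem_insert _ _, x, Set.mem_insert_of_mem _ hx, hadj⟩
  · obtain ⟨x, hx, hadj⟩ := hlink n m h
    exact ⟨x, Set.mem_insert_of_mem _ hx, y n, Set.mem_insert _ _, hadj.symm⟩

theorem exists_injective_seq_not_adj_of_finite_neighborSet {S : Set V} (hS : S.Infinite)
    (c : V → V → V) (hc : S.Pairwise fun u v => (G.neighborSet (c u v)).Finite) :
    ∃ y : ℕ → V, (∀ n, y n ∈ S) ∧ Injective y ∧
      ∀ ⦃i m n⦄, i < m → m < n → ¬G.Adj (y n) (c (y i) (y m)) := by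
  classical
  obtain ⟨y, hyS, hy⟩ := exists_seq_of_forall_finset_exists_prefix (· ∈ S)
    (fun F v => v ∉ F ∧ ∀ p ∈ F.offDiag, ¬G.Adj v (c p.1 p.2)) fun F hF => by
      have hbad : ((F : Set V) ∪ ⋃ p ∈ F.offDiag, G.neighborSet (c p.1 p.2)).Finite := by
        refine F.finite_toSet.union (F.offDiag.finite_toSet.biUnion fun p hp => ?_)
        obtain ⟨h1, h2, h12⟩ := Finset.mem_offDiag.1 hp
        exact hc (hF _ h1) (hF _ h2) h12
      obtain ⟨v, hvS, hv⟩ := (hS.sdiff hbad).nonempty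
      simp only [Set.mem_union, Finset.mem_coe, Set.mem_iUnion, mem_neighborSet, not_or,
        not_exists] at hv
      exact ⟨v, hvS, hv.1, fun p hp hadj => hv.2 p hp hadj.symm⟩
  have hinj : Injective y := injective_iff_pairwise_ne.2 <|
    (Std.Symm.pairwise_on y).2 fun m n hmn hmn' =>
      (hy n).1 (Finset.mem_image.2 ⟨m, Finset.mem_range.2 hmn, hmn'⟩)
  refine ⟨y, hyS, hinj, fun i m n him hmn => (hy n).2 (y i, y m) (Finset.mem_offDiag.2 ?_)⟩
  exact ⟨Finset.mem_image_of_mem _ (Finset.mem_range.2 (him.trans hmn)),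
    Finset.mem_image_of_mem _ (Finset.mem_range.2 hmn), hinj.ne him.ne⟩

theorem isShallowMinor_komega_one_of_pairwise_common_neighbor {S : Set V} (hS : S.Infinite)
    (hindep : S.Pairwise fun u v => ¬G.Adj u v)
    (hcommon : S.Pairwise fun u v => ∃ b, G.Adj u b ∧ G.Adj v b)
    (hfin : ∀ u ∈ S, ∀ b, G.Adj u b → (G.neighborSet b).Finite) :
    IsShallowMinor G Komega 1 := by
  have : ∀ u v, ∃ b, u ∈ S → v ∈ S → u ≠ v → G.Adj u b ∧ G.Adj v b := fun u v => by
    by_cases h : u ∈ S ∧ v ∈ S ∧ u ≠ v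
    · obtain ⟨b, hb⟩ := hcommon h.1 h.2.1 h.2.2
      exact ⟨b, fun _ _ _ => hb⟩
    · exact ⟨u, fun hu hv huv => absurd ⟨hu, hv, huv⟩ h⟩
  choose c hc using this
  obtain ⟨y, hyS, hinj, havoid⟩ := exists_injective_seq_not_adj_of_finite_neighborSet hS c
    fun u hu v hv huv => hfin u hu _ (hc u v hu hv huv).1
  have hleaf : ∀ ⦃i n⦄, i < n → G.Adj (y i) (c (y i) (y n)) ∧ G.Adj (y n) (c (y i) (y n)) :=
    fun i n h => hc _ _ (hyS i) (hyS n) (hinj.ne h.ne)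
  refine isShallowMinor_komega_one_of_stars y (fun n => (fun i => c (y i) (y n)) '' Set.Iio n)
    (fun n => by rintro _ ⟨i, hi, rfl⟩; exact (hleaf hi).2) ?_
    fun m n h => ⟨c (y m) (y n), ⟨m, h, rfl⟩, (hleaf h).1⟩
  refine (Std.Symm.pairwise_on _).2 fun m n hmn => Set.disjoint_left.2 fun x hxm hxn => ?_
  rcases hxm with rfl | ⟨i, hi, rfl⟩ <;> rcases hxn with hxn | ⟨j, hj, hxn⟩
  · exact hinj.ne hmn.ne hxn
  · exact hindep (hyS n) (hyS m) (hinj.ne hmn.ne') (hxn ▸ (hleaf hj).2)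
  · exact hindep (hyS m) (hyS n) (hinj.ne hmn.ne) (hxn ▸ (hleaf hi).2)
  · exact havoid hi hmn ((congrArg (G.Adj (y n)) hxn).mp (hleaf hj).2)

end

theorem aux_big_general {V : Type} (H : SimpleGraph V) (A B : Set V)
    (hdisj : Disjoint A B)
    (hbip : ∀ ⦃u v : V⦄, H.Adj u v → (u ∈ A ∧ v ∈ B) ∨ (u ∈ B ∧ v ∈ A))
    (hA : A.Infinite) (hB : ∀ b ∈ B, (H.neighborSet b).Finite) :
    (∃ X ⊆ A, X.Infinite ∧ ∀ u ∈ X, ∀ v ∈ X, u ≠ v →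
        Disjoint (H.neighborSet u) (H.neighborSet v)) ∨
    IsShallowMinor H Komega 1 := by
  have hnbr : ∀ u ∈ A, ∀ b, H.Adj u b → b ∈ B := fun u hu b hub =>
    (hbip hub).elim And.right fun h => absurd hu (hdisj.notMem_of_mem_right h.1)
  obtain ⟨X, hXA, hX, hXdisj | hXmeet⟩ :=
    hA.exists_infinite_pairwise_or_pairwise_not (Disjoint on H.neighborSet)
  · exact Or.inl ⟨X, hXA, hX, fun u hu v hv => hXdisj hu hv⟩
  refine Or.inr (isShallowMinor_komega_one_of_pairwise_common_neighbor hX ?_ ?_ ?_)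
  · exact fun u hu v hv _ huv => hdisj.notMem_of_mem_left (hXA hv) (hnbr u (hXA hu) v huv)
  · exact fun u hu v hv huv => Set.not_disjoint_iff.1 (hXmeet hu hv huv)
  · exact fun u hu b hub => hB b (hnbr u (hXA hu) b hub)

/-- Let `H` be a bipartite graph with sides `A` and `B`, where `A` is
infinite and every vertex of `B` has finite degree. Then either there is an infinite
`X ⊆ A` whose vertices pairwise have no common neighbor, or `H` admits `K_ω` as a
`1`-shallow minor. -/
theorem aux_big {V : Type} (H : SimpleGraph V) (A B : Set V)
    (hpart : A ∪ B = Set.univ) (hdisj : Disjoint A B)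
    (hbip : ∀ ⦃u v : V⦄, H.Adj u v → (u ∈ A ∧ v ∈ B) ∨ (u ∈ B ∧ v ∈ A))
    (hA : A.Infinite) (hB : ∀ b ∈ B, (H.neighborSet b).Finite) :
    (∃ X ⊆ A, X.Infinite ∧ ∀ u ∈ X, ∀ v ∈ X, u ≠ v →
        Disjoint (H.neighborSet u) (H.neighborSet v)) ∨
    IsShallowMinor H Komega 1 :=
  aux_big_general H A B hdisj hbip hA hB

end NWD
end

section
/- Let G be a graph. (a) If splitter has a winning strategy in the (ℓ, m, d)-splitter game on G, then splitter has a winning strategy in the (ℓ·m, 1, d)-splitter game on G. (b) If splitter has a winning strategy in the limit d-splitter game on G, then splitter has a winning strategy in this game in which every set she picks has exactly one element. -/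
namespace NWD

open SimpleGraph Filter

/-!
Splitter simulates the given strategy `σ` alongside the real game. When connector's move opens
a round of the simulated game, `σ`'s answer `W` is recorded and its vertices are removed one
per real round, connector's moves in the meantime being ignored. The real arena only shrinks,
so outside the vertices still pending it stays inside the simulated arena, and once `W` is
gone connector's next move is a legal move against `σ`. A simulated round thus lasts
`max 1 |W| ≤ m` real rounds, which gives the bound `ℓ·m`; in the limit game the simulated
histories grow forever and form one infinite play against `σ`, which `σ` wins. If `m = 0`
splitter removes nothing, so she can only win on the empty graph.
-/

section Arena

variable {V : Type} (G : SimpleGraph V) (d : ℕ)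

theorem arenaAfter_append_singleton (hist : List (V × Set V)) (v : V) (W : Set V) :
    arenaAfter G d (hist ++ [(v, W)]) = arenaStep G d (arenaAfter G d hist) v W := by
  simp [arenaAfter, List.foldl_append]

theorem arenaStep_subset (A : Set V) (v : V) (W : Set V) : arenaStep G d A v W ⊆ A :=
  fun _ hx => hx.1

theorem mem_arenaStep_of_mem_arenaStep {A A' W W' : Set V} {v x : V}
    (hx : x ∈ arenaStep G d A v W) (hA : A ⊆ A') (hxW' : x ∉ W') :
    x ∈ arenaStep G d A' v W' := by
  obtain ⟨hxA, -, p, hp, hpA⟩ := hx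
  exact ⟨hA hxA, hxW', p, hp, fun y hy => hA (hpA y hy)⟩

theorem self_mem_arenaStep {A W : Set V} {v : V} (hv : v ∈ A) (hvW : v ∉ W) :
    v ∈ arenaStep G d A v W :=
  ⟨hv, hvW, .nil, Nat.zero_le d, by simpa using hv⟩

end Arena

section Play

variable {V : Type} (G : SimpleGraph V) (d : ℕ) (σ : SplitterStrategy V) (c : ℕ → V)

theorem splitterHist_succ (n : ℕ) :
    splitterHist σ c (n + 1) = splitterHist σ c n ++ [(c n, σ (splitterHist σ c n) (c n))] :=
  rfl

theorem length_splitterHist (n : ℕ) : (splitterHist σ c n).length = n := by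
  induction n with
  | zero => rfl
  | succ n ih => simp [splitterHist_succ, ih]

theorem exists_of_mem_splitterHist {n : ℕ} {p : V × Set V} (hp : p ∈ splitterHist σ c n) :
    ∃ j < n, p = (c j, σ (splitterHist σ c j) (c j)) := by
  induction n with
  | zero => simp [splitterHist] at hp
  | succ n ih =>
    rcases List.mem_append.1 hp with hp | hp
    · obtain ⟨j, hj, rfl⟩ := ih hp
      exact ⟨j, by omega, rfl⟩
    · exact ⟨n, by omega, List.mem_singleton.1 hp⟩

theorem consistentPlay_succ {n : ℕ} :
    ConsistentPlay G d σ c (n + 1) ↔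
      ConsistentPlay G d σ c n ∧ c n ∈ arenaAfter G d (splitterHist σ c n) :=
  Nat.forall_lt_succ_right

theorem sum_max_one_ncard_splitterHist_le {m n : ℕ} (hm : 0 < m)
    (hcard : ∀ j < n, (σ (splitterHist σ c j) (c j)).ncard ≤ m) :
    ((splitterHist σ c n).map fun p => max 1 p.2.ncard).sum ≤ n * m := by
  simpa [length_splitterHist] using
    List.sum_le_card_nsmul ((splitterHist σ c n).map fun p => max 1 p.2.ncard) m (by
      intro k hk
      obtain ⟨p, hp, rfl⟩ := List.mem_map.1 hk
      obtain ⟨j, hj, rfl⟩ := exists_of_mem_splitterHist σ c hp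
      exact max_le hm (hcard j hj))

end Play

theorem ConsistentPlay.mono {V : Type} {G : SimpleGraph V} {d n k : ℕ} {σ : SplitterStrategy V}
    {c : ℕ → V} (h : ConsistentPlay G d σ c n) (hk : k ≤ n) : ConsistentPlay G d σ c k :=
  fun j hj => h j (by omega)

theorem isEmpty_of_splitterWinsGame_zero {V : Type} {G : SimpleGraph V} {l d : ℕ}
    {σ : SplitterStrategy V} (hσ : SplitterWinsGame G l 0 d σ) : IsEmpty V := by
  refine ⟨fun v => ?_⟩
  have hcons : ∀ n, ConsistentPlay G d σ (fun _ => v) (n + 1) := by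
    intro n
    induction n with
    | zero =>
      exact (consistentPlay_succ G d σ _).2 ⟨fun _ h => absurd h (Nat.not_lt_zero _), trivial⟩
    | succ n ih =>
      obtain ⟨hfin, hcard, -⟩ := hσ.1 _ n ih
      have hW := (Set.ncard_eq_zero hfin).1 (Nat.le_zero.1 hcard)
      refine (consistentPlay_succ G d σ _).2 ⟨ih, ?_⟩
      rw [splitterHist_succ, arenaAfter_append_singleton, hW]
      exact self_mem_arenaStep G d (ih n n.lt_succ_self) (Set.notMem_empty v)
  obtain ⟨t, -, ht⟩ := hσ.2 (fun _ => v)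
  exact ht (hcons t t t.lt_succ_self)

section Enumerate

variable {V : Type}

noncomputable def enumerate (S : Set V) : List V :=
  open Classical in if h : S.Finite then h.toFinset.toList else []

theorem mem_enumerate {S : Set V} (h : S.Finite) {x : V} : x ∈ enumerate S ↔ x ∈ S := by
  simp [enumerate, h]

theorem length_enumerate (S : Set V) : (enumerate S).length = S.ncard := by
  by_cases h : S.Finite
  · simp [enumerate, h, Set.ncard_eq_toFinset_card S h]
  · simp [enumerate, h, Set.Infinite.ncard h]

end Enumerate

theorem exists_seq_of_isPrefix_succ {α : Type*} (f : ℕ → List α) (hf : ∀ n, f n <+: f (n + 1))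
    (hlen : ∀ i, ∃ n, i < (f n).length) :
    ∃ g : ℕ → α, ∀ n i (hi : i < (f n).length), (f n)[i] = g i := by
  choose N hN using hlen
  refine ⟨fun i => (f (N i))[i]'(hN i), fun n i hi => ?_⟩
  rcases le_total n (N i) with h | h
  · exact (Nat.rel_of_forall_rel_succ_of_le _ hf h).getElem hi
  · exact ((Nat.rel_of_forall_rel_succ_of_le _ hf h).getElem (hN i)).symm

/-- Splitter's record of the simulated game against `σ`: its history, and the vertices of
`σ`'s last answer that are still to be removed. -/
structure SimState (V : Type) where
  virtual : List (V × Set V)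
  pending : List V

namespace SimState

variable {V : Type} (σ : SplitterStrategy V)

noncomputable def refresh (s : SimState V) (v : V) : SimState V :=
  match s.pending with
  | [] => ⟨s.virtual ++ [(v, σ s.virtual v)], enumerate (σ s.virtual v)⟩
  | _ :: _ => s

noncomputable def next (s : SimState V) (v : V) : SimState V :=
  ⟨(s.refresh σ v).virtual, (s.refresh σ v).pending.tail⟩

noncomputable def target (s : SimState V) (v : V) : Option V :=
  (s.refresh σ v).pending.head?

noncomputable def ofHistory (hist : List (V × Set V)) : SimState V :=
  hist.foldl (fun s mv => s.next σ mv.1) ⟨[], []⟩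

noncomputable def run (c : ℕ → V) : ℕ → SimState V
  | 0 => ⟨[], []⟩
  | n + 1 => (run c n).next σ (c n)

theorem refresh_of_pending_eq_nil {s : SimState V} (h : s.pending = []) (v : V) :
    s.refresh σ v = ⟨s.virtual ++ [(v, σ s.virtual v)], enumerate (σ s.virtual v)⟩ := by
  simp [refresh, h]

theorem refresh_of_pending_eq_cons {s : SimState V} {x : V} {rest : List V}
    (h : s.pending = x :: rest) (v : V) : s.refresh σ v = s := by
  simp [refresh, h]

theorem next_of_pending_eq_nil {s : SimState V} (h : s.pending = []) (v : V) :
    s.next σ v = ⟨s.virtual ++ [(v, σ s.virtual v)], (enumerate (σ s.virtual v)).tail⟩ := by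
  simp [next, refresh_of_pending_eq_nil σ h]

theorem next_of_pending_eq_cons {s : SimState V} {x : V} {rest : List V}
    (h : s.pending = x :: rest) (v : V) : s.next σ v = ⟨s.virtual, rest⟩ := by
  simp [next, refresh_of_pending_eq_cons σ h, h]

theorem ofHistory_splitterHist (τ : SplitterStrategy V) (c : ℕ → V) (n : ℕ) :
    ofHistory σ (splitterHist τ c n) = run σ c n := by
  induction n with
  | zero => rfl
  | succ n ih => simp [ofHistory, splitterHist_succ, List.foldl_append, ← ih, run]

section Run

variable (c : ℕ → V)

theorem run_succ (n : ℕ) : run σ c (n + 1) = (run σ c n).next σ (c n) :=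
  rfl

theorem virtual_run_isPrefix_succ (n : ℕ) :
    (run σ c n).virtual <+: (run σ c (n + 1)).virtual := by
  rcases h : (run σ c n).pending with _ | ⟨x, rest⟩
  · rw [run_succ, next_of_pending_eq_nil σ h]
    exact List.prefix_append _ _
  · rw [run_succ, next_of_pending_eq_cons σ h]

theorem length_virtual_run_lt (n : ℕ) :
    (run σ c n).virtual.length <
      (run σ c (n + (run σ c n).pending.length + 1)).virtual.length := by
  generalize hk : (run σ c n).pending.length = k
  induction k generalizing n with
  | zero =>
    simp [run_succ, next_of_pending_eq_nil σ (List.length_eq_zero_iff.1 hk)]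
  | succ k ih =>
    obtain ⟨x, rest, h⟩ := List.exists_cons_of_length_eq_add_one hk
    have hnext := next_of_pending_eq_cons σ h (c n)
    have hrest : (run σ c (n + 1)).pending.length = k := by
      rw [run_succ, hnext]
      simpa [h] using hk
    have := ih (n + 1) hrest
    rw [run_succ, hnext] at this
    rwa [Nat.add_right_comm n, Nat.add_assoc n] at this

theorem exists_lt_length_virtual_run (i : ℕ) : ∃ n, i < (run σ c n).virtual.length := by
  induction i with
  | zero => exact ⟨_, (Nat.zero_le _).trans_lt (length_virtual_run_lt σ c 0)⟩
  | succ i ih =>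
    obtain ⟨n, hn⟩ := ih
    exact ⟨_, Nat.lt_of_le_of_lt hn (length_virtual_run_lt σ c n)⟩

theorem add_length_pending_run (n : ℕ) :
    n + (run σ c n).pending.length =
      ((run σ c n).virtual.map fun p => max 1 p.2.ncard).sum := by
  induction n with
  | zero => rfl
  | succ n ih =>
    rcases h : (run σ c n).pending with _ | ⟨x, rest⟩
    · rw [h] at ih
      simp only [run_succ, next_of_pending_eq_nil σ h, List.length_tail, length_enumerate,
        List.map_append, List.sum_append, ← ih, List.length_nil, List.map_cons, List.map_nil,
        List.sum_singleton]
      omega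
    · rw [h] at ih
      simp only [run_succ, next_of_pending_eq_cons σ h, ← ih, List.length_cons]
      omega

theorem exists_virtual_run_eq_splitterHist :
    ∃ c' : ℕ → V, ∀ n, (run σ c n).virtual = splitterHist σ c' (run σ c n).virtual.length := by
  obtain ⟨g, hg⟩ := exists_seq_of_isPrefix_succ (fun n => (run σ c n).virtual)
    (virtual_run_isPrefix_succ σ c) (exists_lt_length_virtual_run σ c)
  refine ⟨fun i => (g i).1, fun n => ?_⟩
  induction n with
  | zero => rfl
  | succ n ih =>
    rcases h : (run σ c n).pending with _ | ⟨x, rest⟩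
    · have hlast := hg (n + 1) (run σ c n).virtual.length (by
        simp [run_succ, next_of_pending_eq_nil σ h])
      simp only [run_succ, next_of_pending_eq_nil σ h, List.getElem_concat_length] at hlast
      rw [run_succ, next_of_pending_eq_nil σ h, List.length_append, List.length_singleton,
        splitterHist_succ, ← ih, ← hlast]
    · rw [run_succ, next_of_pending_eq_cons σ h]
      exact ih

end Run

end SimState

section OneVertexStrategy

variable {V : Type} (G : SimpleGraph V) (d : ℕ) (σ : SplitterStrategy V)

open SimState

-- The fallback `v` keeps the move legal, as connector's move lies in the arena.
noncomputable def removedVertex (hist : List (V × Set V)) (v : V) : V :=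
  open Classical in
  let x := ((ofHistory σ hist).target σ v).getD v
  if x ∈ arenaAfter G d hist then x else v

def oneVertexStrategy : SplitterStrategy V := fun hist v => {removedVertex G d σ hist v}

theorem oneVertexStrategy_subset {hist : List (V × Set V)} {v : V}
    (hv : v ∈ arenaAfter G d hist) : oneVertexStrategy G d σ hist v ⊆ arenaAfter G d hist := by
  rw [oneVertexStrategy, Set.singleton_subset_iff, removedVertex]
  split_ifs with h
  exacts [h, hv]

theorem target_not_mem_arenaStep {hist : List (V × Set V)} {v x : V}
    (hx : (ofHistory σ hist).target σ v = some x) :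
    x ∉ arenaStep G d (arenaAfter G d hist) v (oneVertexStrategy G d σ hist v) := by
  rintro ⟨hxA, hxW, -⟩
  exact hxW (by simp [oneVertexStrategy, removedVertex, hx, hxA])

theorem refresh_invariant {s : SimState V} {v : V} {R : Set V} {c' : ℕ → V}
    (hfin : ∀ c n, ConsistentPlay G d σ c (n + 1) → (σ (splitterHist σ c n) (c n)).Finite)
    (hs : s.virtual = splitterHist σ c' s.virtual.length)
    (hr : (s.refresh σ v).virtual = splitterHist σ c' (s.refresh σ v).virtual.length)
    (hcons : ConsistentPlay G d σ c' s.virtual.length)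
    (hR : R \ {x | x ∈ s.pending} ⊆ arenaAfter G d s.virtual) (hv : v ∈ R) :
    ConsistentPlay G d σ c' (s.refresh σ v).virtual.length ∧
      arenaStep G d R v ∅ \ {x | x ∈ (s.refresh σ v).pending} ⊆
        arenaAfter G d (s.refresh σ v).virtual := by
  rcases hp : s.pending with _ | ⟨x, rest⟩
  · rw [refresh_of_pending_eq_nil σ hp] at hr ⊢
    rw [List.length_append, List.length_singleton, splitterHist_succ, ← hs] at hr
    have hv' : c' s.virtual.length = v :=
      (congrArg Prod.fst (List.singleton_inj.1 (List.append_cancel_left hr))).symm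
    have hRA : R ⊆ arenaAfter G d s.virtual := fun y hy => hR ⟨hy, by simp [hp]⟩
    have hcons' : ConsistentPlay G d σ c' (s.virtual.length + 1) :=
      (consistentPlay_succ G d σ c').2 ⟨hcons, by rw [hv', ← hs]; exact hRA hv⟩
    have hW : (σ s.virtual v).Finite := by simpa [hv', ← hs] using hfin c' _ hcons'
    refine ⟨by simpa using hcons', ?_⟩
    rw [arenaAfter_append_singleton]
    rintro y ⟨hy, hyW⟩
    exact mem_arenaStep_of_mem_arenaStep G d hy hRA (by simpa [mem_enumerate hW] using hyW)
  · rw [refresh_of_pending_eq_cons σ hp]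
    exact ⟨hcons, fun y hy => hR ⟨arenaStep_subset G d R v ∅ hy.1, hy.2⟩⟩

theorem simulation_invariant {c c' : ℕ → V}
    (hfin : ∀ c n, ConsistentPlay G d σ c (n + 1) → (σ (splitterHist σ c n) (c n)).Finite)
    (hc' : ∀ n, (run σ c n).virtual = splitterHist σ c' (run σ c n).virtual.length) (n : ℕ)
    (hc : ConsistentPlay G d (oneVertexStrategy G d σ) c n) :
    ConsistentPlay G d σ c' (run σ c n).virtual.length ∧
      arenaAfter G d (splitterHist (oneVertexStrategy G d σ) c n) \
        {x | x ∈ (run σ c n).pending} ⊆ arenaAfter G d (run σ c n).virtual := by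
  induction n with
  | zero => exact ⟨fun k hk => absurd hk (Nat.not_lt_zero k), fun _ _ => trivial⟩
  | succ n ih =>
    obtain ⟨hc, hcn⟩ := (consistentPlay_succ G d _ c).1 hc
    obtain ⟨hcons, hR⟩ := ih hc
    obtain ⟨hcons', hsub⟩ := refresh_invariant G d σ hfin (hc' n) (hc' (n + 1)) hcons hR hcn
    refine ⟨hcons', ?_⟩
    rw [splitterHist_succ, arenaAfter_append_singleton]
    rintro y ⟨hy, hyP⟩
    refine hsub ⟨mem_arenaStep_of_mem_arenaStep G d hy subset_rfl (Set.notMem_empty y), ?_⟩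
    change y ∉ ((run σ c n).refresh σ (c n)).pending.tail at hyP
    rcases hP : ((run σ c n).refresh σ (c n)).pending with _ | ⟨x, rest⟩
    · simp
    · have hx : (ofHistory σ (splitterHist (oneVertexStrategy G d σ) c n)).target σ (c n) =
          some x := by
        rw [ofHistory_splitterHist, target, hP, List.head?_cons]
      rw [hP] at hyP
      intro hyx
      rcases List.mem_cons.1 hyx with rfl | hy'
      exacts [target_not_mem_arenaStep G d σ hx hy, hyP hy']

theorem splitterWinsLimit_oneVertexStrategy (hσ : SplitterWinsLimit G d σ) :
    SplitterWinsLimit G d (oneVertexStrategy G d σ) := by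
  refine ⟨fun c n hc =>
    ⟨Set.finite_singleton _, oneVertexStrategy_subset G d σ (hc n n.lt_succ_self)⟩, fun c => ?_⟩
  by_contra! hc
  obtain ⟨c', hc'⟩ := exists_virtual_run_eq_splitterHist σ c
  obtain ⟨t, ht⟩ := hσ.2 c'
  obtain ⟨n, hn⟩ := exists_lt_length_virtual_run σ c t
  exact ht ((simulation_invariant G d σ (fun c n h => (hσ.1 c n h).1) hc' n
    (fun k _ => hc k)).1 t hn)

theorem splitterWinsGame_oneVertexStrategy {l m : ℕ} (hσ : SplitterWinsGame G l m d σ)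
    (hm : 0 < m) : SplitterWinsGame G (l * m) 1 d (oneVertexStrategy G d σ) := by
  refine ⟨fun c n hc => ⟨Set.finite_singleton _, (Set.ncard_singleton _).le,
    oneVertexStrategy_subset G d σ (hc n n.lt_succ_self)⟩, fun c => ?_⟩
  by_contra! hc
  obtain ⟨c', hc'⟩ := exists_virtual_run_eq_splitterHist σ c
  have hcons := (simulation_invariant G d σ (fun c n h => (hσ.1 c n h).1) hc' (l * m + 1)
    (fun k hk => hc k (by omega))).1
  have hcount : l * m + 1 ≤ (run σ c (l * m + 1)).virtual.length * m := by
    have hrounds := add_length_pending_run σ c (l * m + 1)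
    have hsum := sum_max_one_ncard_splitterHist_le σ c' hm
      fun j hj => (hσ.1 c' j (hcons.mono hj)).2.1
    rw [← hc' (l * m + 1)] at hsum
    omega
  have hl : l < (run σ c (l * m + 1)).virtual.length := Nat.lt_of_mul_lt_mul_right hcount
  obtain ⟨t, htl, ht⟩ := hσ.2 c'
  exact ht (hcons t (htl.trans_lt hl))

end OneVertexStrategy

/-- (a) If splitter has a winning strategy in the `(ℓ, m, d)`-splitter
game on `G`, then she has one in the `(ℓ·m, 1, d)`-splitter game on `G`. (b) If splitter
has a winning strategy in the limit `d`-splitter game on `G`, then she has a winning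
strategy that always picks singleton sets. -/
theorem one_move {V : Type} (G : SimpleGraph V) (d : ℕ) :
    (∀ l m : ℕ, (∃ σ : SplitterStrategy V, SplitterWinsGame G l m d σ) →
      ∃ σ : SplitterStrategy V, SplitterWinsGame G (l * m) 1 d σ) ∧
    ((∃ σ : SplitterStrategy V, SplitterWinsLimit G d σ) →
      ∃ σ : SplitterStrategy V, SplitterWinsLimit G d σ ∧
        ∀ (hist : List (V × Set V)) (v : V), ∃ x : V, σ hist v = {x}) := by
  refine ⟨fun l m ⟨σ, hσ⟩ => ?_, fun ⟨σ, hσ⟩ => ⟨oneVertexStrategy G d σ,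
    splitterWinsLimit_oneVertexStrategy G d σ hσ, fun _ _ => ⟨_, rfl⟩⟩⟩
  rcases Nat.eq_zero_or_pos m with rfl | hm
  · have := isEmpty_of_splitterWinsGame_zero hσ
    exact ⟨σ, fun c => isEmptyElim (c 0), fun c => isEmptyElim (c 0)⟩
  · exact ⟨oneVertexStrategy G d σ, splitterWinsGame_oneVertexStrategy G d σ hσ hm⟩

end NWD
end

section
/- If a class C of finite graphs is limit winning for splitter, then C is limit topologically nowhere dense, i.e., the countably infinite clique K_ω does not belong to C*∇̃ω. -/
namespace NWD

open SimpleGraph Filter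

/-! Suppose `K_ω` is a topological shallow minor of `G` at depth `d`, with branch vertices `f i`
and paths `P` of length at most `2d+1`. Against any splitter strategy in the limit
`2(2d+1)`-game, connector keeps an infinite set `I` of indices such that all paths between
branch vertices indexed by `I` lie in the arena, and plays the branch vertex of `min I`: every
such path is then within distance `2(2d+1)` of it. A finite move `W` of splitter only spoils
finitely many indices, because an internal vertex of the model lies on a single path, so
connector never runs out of moves. -/

section SplitterGame

lemma arenaAfter_append {V : Type} (G : SimpleGraph V) (d : ℕ) (hist : List (V × Set V))
    (v : V) (W : Set V) :
    arenaAfter G d (hist ++ [(v, W)]) = arenaStep G d (arenaAfter G d hist) v W := by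
  simp [arenaAfter, List.foldl_append]

lemma IsTopMinorModel.finite_setOf_mem_support {V W : Type} {G : SimpleGraph V}
    {H : SimpleGraph W} {d : ℕ} {f : W → V}
    {P : ∀ ⦃u v : W⦄, H.Adj u v → G.Walk (f u) (f v)}
    (hM : IsTopMinorModel G H d f P) {w : V} (hw : w ∉ Set.range f) :
    {j | ∃ k, ∃ h : H.Adj j k, w ∈ (P h).support}.Finite := by
  rcases Set.eq_empty_or_nonempty {j | ∃ k, ∃ h : H.Adj j k, w ∈ (P h).support} with
    he | ⟨j₀, k₀, h₀, hw₀⟩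
  · exact he ▸ Set.finite_empty
  refine (Set.toFinite {j₀, k₀}).subset ?_
  rintro j ⟨k, h, hwj⟩
  have hpair : s(j, k) = s(j₀, k₀) := by
    by_contra hne
    rcases (hM.2.2.2.2 h h₀ hne w hwj hw₀).1 with rfl | rfl <;> exact hw ⟨_, rfl⟩
  rcases Sym2.eq_iff.mp hpair with ⟨rfl, -⟩ | ⟨rfl, -⟩ <;> simp

variable {V : Type} {G : SimpleGraph V} {d : ℕ} {f : ℕ → V}
  {P : ∀ ⦃u v : ℕ⦄, Komega.Adj u v → G.Walk (f u) (f v)}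

lemma IsTopMinorModel.eq_or_eq_of_mem_support (hM : IsTopMinorModel G Komega d f P)
    {a j k : ℕ} (h : Komega.Adj j k) (ha : f a ∈ (P h).support) : a = j ∨ a = k := by
  by_contra! hne
  have hadj : Komega.Adj a (a + 1) := by simp [Komega]
  have hpair : s(a, a + 1) ≠ s(j, k) := fun he =>
    by rcases Sym2.eq_iff.mp he with ⟨h₁, -⟩ | ⟨h₁, -⟩ <;> simp_all
  rcases (hM.2.2.2.2 hadj h hpair (f a) (P hadj).start_mem_support ha).2 with h₁ | h₁
  · exact hne.1 (hM.1 h₁)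
  · exact hne.2 (hM.1 h₁)

variable (P) in
/-- A branch vertex in `W` spoils only its own index, a non-branch vertex in `W` the (at most
two) ends of the single path through it. -/
def pruneIndices (W : Set V) (I : Set ℕ) : Set ℕ :=
  {j ∈ I | f j ∉ W ∧
    ∀ w ∈ W \ Set.range f, ∀ k, ∀ h : Komega.Adj j k, w ∉ (P h).support}

lemma IsTopMinorModel.infinite_pruneIndices (hM : IsTopMinorModel G Komega d f P)
    {W : Set V} (hW : W.Finite) {I : Set ℕ} (hI : I.Infinite) :
    (pruneIndices P W I).Infinite := by
  have hspoilt : (f ⁻¹' W ∪ ⋃ w ∈ W \ Set.range f,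
      {j | ∃ k, ∃ h : Komega.Adj j k, w ∈ (P h).support}).Finite :=
    (hW.preimage hM.1.injOn).union <|
      hW.sdiff.biUnion fun w hw => hM.finite_setOf_mem_support hw.2
  refine (hI.sdiff hspoilt).mono ?_
  rintro j ⟨hjI, hj⟩
  simp only [Set.mem_union, Set.mem_preimage, Set.mem_iUnion, not_or, not_exists] at hj
  exact ⟨hjI, hj.1, fun w hw k h hwj => hj.2 w hw ⟨k, h, hwj⟩⟩

lemma IsTopMinorModel.not_mem_of_mem_pruneIndices (hM : IsTopMinorModel G Komega d f P)
    {W : Set V} {I : Set ℕ} {j k : ℕ} (hj : j ∈ pruneIndices P W I)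
    (hk : k ∈ pruneIndices P W I) (h : Komega.Adj j k) {x : V} (hx : x ∈ (P h).support) :
    x ∉ W := by
  intro hxW
  by_cases hxf : x ∈ Set.range f
  · obtain ⟨a, rfl⟩ := hxf
    rcases hM.eq_or_eq_of_mem_support h hx with rfl | rfl
    · exact hj.2.1 hxW
    · exact hk.2.1 hxW
  · exact hj.2.2 x ⟨hxW, hxf⟩ k h hx

variable (P) in
def PathsWithin (I : Set ℕ) (A : Set V) : Prop :=
  ∀ j ∈ I, ∀ k ∈ I, ∀ h : Komega.Adj j k, ∀ x ∈ (P h).support, x ∈ A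

lemma PathsWithin.mem_of_infinite {I : Set ℕ} {A : Set V} (hA : PathsWithin P I A)
    (hI : I.Infinite) {i : ℕ} (hi : i ∈ I) : f i ∈ A := by
  obtain ⟨k, hkI, hki⟩ := (hI.sdiff (Set.finite_singleton i)).nonempty
  have h : Komega.Adj i k := fun hik => hki (hik ▸ rfl)
  exact hA i hi k hkI h _ (P h).start_mem_support

lemma PathsWithin.exists_walk (hM : IsTopMinorModel G Komega d f P) {I : Set ℕ} {A : Set V}
    (hA : PathsWithin P I A) {i j k : ℕ} (hi : i ∈ I) (hj : j ∈ I) (hk : k ∈ I)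
    (h : Komega.Adj j k) {x : V} (hx : x ∈ (P h).support) :
    ∃ p : G.Walk (f i) x, p.length ≤ 2 * (2 * d + 1) ∧ ∀ y ∈ p.support, y ∈ A := by
  classical
  have hlen := ((P h).length_takeUntil_le_length hx).trans (hM.2.2.1 h)
  have hsupp : ∀ y ∈ ((P h).takeUntil x hx).support, y ∈ A := fun y hy =>
    hA j hj k hk h y ((P h).support_takeUntil_subset_support hx hy)
  by_cases hij : i = j
  · subst hij
    exact ⟨_, by omega, hsupp⟩
  refine ⟨(P hij).append ((P h).takeUntil x hx), ?_, fun y hy => ?_⟩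
  · rw [SimpleGraph.Walk.length_append]
    have := hM.2.2.1 hij
    omega
  · rcases (SimpleGraph.Walk.mem_support_append_iff _ _).mp hy with hy | hy
    · exact hA i hi j hj hij y hy
    · exact hsupp y hy

lemma PathsWithin.arenaStep (hM : IsTopMinorModel G Komega d f P) {D : ℕ}
    (hD : 2 * (2 * d + 1) ≤ D) {I : Set ℕ} {A W : Set V} (hA : PathsWithin P I A) {i : ℕ}
    (hi : i ∈ I) : PathsWithin P (pruneIndices P W I) (arenaStep G D A (f i) W) := by
  intro j hj k hk h x hx
  obtain ⟨p, hp, hpA⟩ := hA.exists_walk hM hi hj.1 hk.1 h hx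
  exact ⟨hA j hj.1 k hk.1 h x hx, hM.not_mem_of_mem_pruneIndices hj hk h hx, p, by omega, hpA⟩

variable (f P) in
noncomputable def connectorPlay (σ : SplitterStrategy V) : ℕ → List (V × Set V) × Set ℕ
  | 0 => ([], Set.univ)
  | n + 1 =>
    let s := connectorPlay σ n
    let W := σ s.1 (f (sInf s.2))
    (s.1 ++ [(f (sInf s.2), W)], pruneIndices P W s.2)

lemma splitterHist_eq_connectorPlay (σ : SplitterStrategy V) (n : ℕ) :
    splitterHist σ (fun m => f (sInf (connectorPlay f P σ m).2)) n =
      (connectorPlay f P σ n).1 := by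
  induction n with
  | zero => rfl
  | succ n ih => simp only [splitterHist, ih]; rfl

theorem IsTopMinorModel.not_splitterWinsLimit (hM : IsTopMinorModel G Komega d f P) {D : ℕ}
    (hD : 2 * (2 * d + 1) ≤ D) (σ : SplitterStrategy V) : ¬ SplitterWinsLimit G D σ := by
  intro hσ
  set c : ℕ → V := fun m => f (sInf (connectorPlay f P σ m).2)
  have hhist := splitterHist_eq_connectorPlay (P := P) σ
  have hplay : ∀ n, ConsistentPlay G D σ c n ∧ (connectorPlay f P σ n).2.Infinite ∧
      PathsWithin P (connectorPlay f P σ n).2 (arenaAfter G D (connectorPlay f P σ n).1) := by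
    intro n
    induction n with
    | zero => exact ⟨nofun, Set.infinite_univ, fun _ _ _ _ _ _ _ => Set.mem_univ _⟩
    | succ n ih =>
      obtain ⟨hcons, hI, hA⟩ := ih
      have hmin := Nat.sInf_mem hI.nonempty
      have hcons' : ConsistentPlay G D σ c (n + 1) := fun k hk => by
        rcases Nat.lt_succ_iff_lt_or_eq.mp hk with hk | rfl
        · exact hcons k hk
        · rw [hhist]; exact hA.mem_of_infinite hI hmin
      have hW := (hσ.1 c n hcons').1
      rw [hhist] at hW
      refine ⟨hcons', hM.infinite_pruneIndices hW hI, ?_⟩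
      change PathsWithin P _ (arenaAfter G D ((connectorPlay f P σ n).1 ++ [_]))
      rw [arenaAfter_append]
      exact hA.arenaStep hM hD hmin
  obtain ⟨n, hn⟩ := hσ.2 c
  exact hn ((hplay (n + 1)).1 n n.lt_succ_self)

end SplitterGame

theorem gm_tnd_general (U : Ultrafilter ℕ)
    (C : GraphClass) (hwin : LimitWinningForSplitter U C) :
    ¬ ∃ d : ℕ, InLimitTopMinor U C d Komega := by
  rintro ⟨d, V, G, hG, f, P, hM⟩
  obtain ⟨σ, hσ⟩ := hwin (2 * (2 * d + 1)) V G hG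
  exact hM.not_splitterWinsLimit le_rfl σ hσ

/-- If `C` is limit winning for splitter, then `C` is limit topologically
nowhere dense: `K_ω ∉ C* ∇̃ ω`. -/
theorem gm_tnd (U : Ultrafilter ℕ) (hU : ∀ a : ℕ, {a} ∉ U)
    (C : GraphClass) (hfin : FiniteClass C) (hwin : LimitWinningForSplitter U C) :
    ¬ ∃ d : ℕ, InLimitTopMinor U C d Komega :=
  gm_tnd_general U C hwin

end NWD
end
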